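/- arXiv:1211.3588 — 6 statements merged into one kernel-verified Lean document; each statement's English description precedes it below -/
import Mathlib

section
/- Let n ≥ 1 and let H be a subgroup of Sym(n). Then the orbit sum F := ∑_{σ∈H} (∏_{i=1}^{n-1} X_i^i)^σ ∈ ℤ[X_1,…,X_n] satisfies Stab_{Sym(n)}(F) = H; that is, F is a Sym(n)-relative H-invariant. -/
/-!
The exponents `0, 1, …, n - 1` of `m = ∏ i, X i ^ i` are pairwise distinct, so `σ ↦ m^σ` is
injective on permutations. Hence the coefficient of `m^τ` in the orbit sum `F` is `1` if `τ ∈ H`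
and `0` otherwise, while the coefficient of `m^τ` in `F^τ` equals that of `m` in `F`, namely `1`.
So `F^τ = F` forces `τ ∈ H`; the converse is a reindexing of the sum over `H`.
-/

open MvPolynomial Function Equiv

variable {ι R : Type*}

theorem Finsupp.mapDomain_perm_injective {D : ι →₀ ℕ} (hD : Injective D) :
    Injective fun σ : Perm ι => D.mapDomain σ := by
  intro σ τ h
  ext i
  have hi : D i = D (τ.symm (σ i)) := by
    rw [← Finsupp.mapDomain_apply σ.injective D i, show D.mapDomain σ = D.mapDomain τ from h,
      ← Finsupp.mapDomain_apply τ.injective D, τ.apply_symm_apply]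
  simpa using congrArg τ (hD hi).symm

namespace MvPolynomial

variable [CommSemiring R]

theorem prod_X_pow_eq_monomial_equivFunOnFinite [Fintype ι] (d : ι → ℕ) :
    ∏ i, (X i : MvPolynomial ι R) ^ d i = monomial (Finsupp.equivFunOnFinite.symm d) 1 := by
  rw [monomial_eq, C_1, one_mul, Finsupp.prod_fintype _ _ fun _ => pow_zero _]
  rfl

noncomputable def orbitSum (H : Subgroup (Perm ι)) [Fintype H] (p : MvPolynomial ι R) :
    MvPolynomial ι R :=
  ∑ σ : H, rename (σ : Perm ι) p

variable (H : Subgroup (Perm ι)) [Fintype H]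

theorem rename_orbitSum_of_mem (p : MvPolynomial ι R) {τ : Perm ι} (hτ : τ ∈ H) :
    rename τ (orbitSum H p) = orbitSum H p := by
  simp only [orbitSum, map_sum, rename_rename]
  exact Fintype.sum_equiv (Equiv.mulLeft ⟨τ, hτ⟩) _ _ fun σ => by
    simp only [coe_mulLeft, Subgroup.coe_mul, Perm.coe_mul]

open Classical in
theorem coeff_mapDomain_orbitSum_monomial {D : ι →₀ ℕ} (hD : Injective D) (τ : Perm ι) :
    coeff (D.mapDomain τ) (orbitSum H (monomial D (1 : R))) = if τ ∈ H then 1 else 0 := by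
  simp only [orbitSum, rename_monomial, coeff_sum, coeff_monomial,
    (Finsupp.mapDomain_perm_injective hD).eq_iff, Fintype.sum_ite_eq_ite_exists (fun σ : H => (σ : Perm ι) = τ)
    (fun _ _ hσ hσ' => Subtype.ext (hσ.trans hσ'.symm)), Subtype.exists, exists_prop,
    exists_eq_right]

theorem rename_orbitSum_monomial_eq_iff [Nontrivial R] {D : ι →₀ ℕ} (hD : Injective D)
    (τ : Perm ι) :
    rename τ (orbitSum H (monomial D (1 : R))) = orbitSum H (monomial D 1) ↔ τ ∈ H := by
  refine ⟨fun h => ?_, rename_orbitSum_of_mem H _⟩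
  have hcoeff := congrArg (coeff (D.mapDomain τ)) h
  have hone : coeff D (orbitSum H (monomial D (1 : R))) = 1 := by
    simpa [H.one_mem] using coeff_mapDomain_orbitSum_monomial (R := R) H hD 1
  rw [coeff_rename_mapDomain _ τ.injective, hone, coeff_mapDomain_orbitSum_monomial H hD] at hcoeff
  by_contra hτ
  rw [if_neg hτ] at hcoeff
  exact one_ne_zero hcoeff

end MvPolynomial

theorem statement0_general (n : ℕ) (H : Subgroup (Equiv.Perm (Fin n))) [Fintype ↥H] :
    ∀ τ : Equiv.Perm (Fin n),
      rename (⇑τ) (∑ σ : H, rename (⇑(σ : Equiv.Perm (Fin n)))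
          (∏ i : Fin n, (X i : MvPolynomial (Fin n) ℤ) ^ (i : ℕ)))
        = (∑ σ : H, rename (⇑(σ : Equiv.Perm (Fin n)))
          (∏ i : Fin n, (X i : MvPolynomial (Fin n) ℤ) ^ (i : ℕ)))
      ↔ τ ∈ H := by
  intro τ
  rw [prod_X_pow_eq_monomial_equivFunOnFinite]
  exact rename_orbitSum_monomial_eq_iff H (fun _ _ h => Fin.val_injective h) τ

/-- Let `n ≥ 1` and let `H` be a subgroup of `Sym(n)`.  The orbit sum
`F := ∑_{σ ∈ H} (∏_{i} X_i^i)^σ` (where the monomial is `X_0^0 X_1^1 ⋯ X_{n-1}^{n-1}`,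
i.e. `∏_{i=1}^{n-1} X_i^i` up to relabelling of the variables, and `m^σ` denotes the
variable-permutation action `X_i ↦ X_{σ(i)}`, i.e. `MvPolynomial.rename σ`) satisfies
`Stab_{Sym(n)}(F) = H`:  for every permutation `τ`, `F^τ = F` iff `τ ∈ H`. -/
theorem statement0 (n : ℕ) (hn : 1 ≤ n) (H : Subgroup (Equiv.Perm (Fin n))) [Fintype ↥H] :
    ∀ τ : Equiv.Perm (Fin n),
      rename (⇑τ) (∑ σ : H, rename (⇑(σ : Equiv.Perm (Fin n)))
          (∏ i : Fin n, (X i : MvPolynomial (Fin n) ℤ) ^ (i : ℕ)))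
        = (∑ σ : H, rename (⇑(σ : Equiv.Perm (Fin n)))
          (∏ i : Fin n, (X i : MvPolynomial (Fin n) ℤ) ^ (i : ℕ)))
      ↔ τ ∈ H :=
  statement0_general n H
end

section
/- Let n ≥ 1, let H ≤ G be subgroups of Sym(n), and let F ∈ ℤ[X_1,…,X_n] be a G-relative H-invariant (i.e., Stab_G(F) = H). Then, viewing F as an element of ℚ(X_1,…,X_n), the fixed field ℚ(X_1,…,X_n)^H is generated over ℚ(X_1,…,X_n)^G by F: ℚ(X_1,…,X_n)^H = ℚ(X_1,…,X_n)^G(F). -/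
open MvPolynomial

/-- The rational function field `ℚ(X_1,…,X_n)`, realized as the fraction field of the
polynomial ring `ℚ[X_1,…,X_n]`. -/
abbrev RatFuncField (n : ℕ) : Type := FractionRing (MvPolynomial (Fin n) ℚ)

/-- The field automorphism of `ℚ(X_1,…,X_n)` induced by a permutation `σ` of the
variables, `X_i ↦ X_{σ(i)}`. -/
noncomputable def permAut (n : ℕ) (σ : Equiv.Perm (Fin n)) :
    RatFuncField n ≃+* RatFuncField n :=
  IsFractionRing.ringEquivOfRingEquiv (renameEquiv ℚ σ).toRingEquiv

/-- The fixed field `ℚ(X_1,…,X_n)^G` of a subgroup `G ≤ Sym(n)`. -/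
noncomputable def fixedField (n : ℕ) (G : Subgroup (Equiv.Perm (Fin n))) :
    Subfield (RatFuncField n) where
  carrier := {x | ∀ σ ∈ G, permAut n σ x = x}
  mul_mem' := by
    intro a b ha hb σ hσ
    rw [map_mul, ha σ hσ, hb σ hσ]
  one_mem' := by intro σ hσ; rw [map_one]
  add_mem' := by
    intro a b ha hb σ hσ
    rw [map_add, ha σ hσ, hb σ hσ]
  zero_mem' := by intro σ hσ; rw [map_zero]
  neg_mem' := by intro a ha σ hσ; rw [map_neg, ha σ hσ]
  inv_mem' := by intro a ha σ hσ; rw [map_inv₀, ha σ hσ]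

/-- A polynomial `F ∈ ℤ[X_1,…,X_n]`, viewed as an element of `ℚ(X_1,…,X_n)`. -/
noncomputable def asRatFunc (n : ℕ) (F : MvPolynomial (Fin n) ℤ) : RatFuncField n :=
  algebraMap (MvPolynomial (Fin n) ℚ) (RatFuncField n) (map (Int.castRingHom ℚ) F)

/-! `Sym(n)` acts faithfully on `L = ℚ(X_1,…,X_n)`, so by Artin's theorem `L / L^G` is Galois
with group `G`. In the Galois correspondence the subfield `L^G(F)` corresponds to the subgroup of
`G` fixing `F`, which is `H`; hence `L^H = L^G(F)`. -/

namespace IsGaloisGroup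

variable {G K L : Type*} [Group G] [Finite G] [Field K] [Field L] [Algebra K L]
  [MulSemiringAction G L] [IsGaloisGroup G K L]

theorem fixedPoints_stabilizer_eq_adjoin_simple (f : L) :
    FixedPoints.intermediateField (MulAction.stabilizer G f) = IntermediateField.adjoin K {f} := by
  refine le_antisymm ?_ (IntermediateField.adjoin_simple_le_iff.mpr fun g ↦ g.2)
  conv_rhs => rw [← fixedPoints_fixingSubgroup G K L (IntermediateField.adjoin K {f})]
  exact fixedPoints_le_of_le G K L _ _ fun _ hg ↦
    hg ⟨f, IntermediateField.mem_adjoin_simple_self K f⟩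

end IsGaloisGroup

section PermAction

variable (n : ℕ)

@[simp]
theorem permAut_algebraMap (σ : Equiv.Perm (Fin n)) (p : MvPolynomial (Fin n) ℚ) :
    permAut n σ (algebraMap (MvPolynomial (Fin n) ℚ) (RatFuncField n) p)
      = algebraMap (MvPolynomial (Fin n) ℚ) (RatFuncField n) (rename σ p) :=
  IsFractionRing.ringEquivOfRingEquiv_algebraMap _ p

theorem RatFuncField.ringEquiv_ext {e₁ e₂ : RatFuncField n ≃+* RatFuncField n}
    (h : ∀ p, e₁ (algebraMap (MvPolynomial (Fin n) ℚ) _ p) = e₂ (algebraMap _ _ p)) :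
    e₁ = e₂ :=
  RingEquiv.toRingHom_injective <| IsLocalization.ringHom_ext (nonZeroDivisors _) <|
    RingHom.ext h

noncomputable def permAutHom : Equiv.Perm (Fin n) →* RingAut (RatFuncField n) where
  toFun := permAut n
  map_one' := RatFuncField.ringEquiv_ext n fun p ↦ by simp
  map_mul' σ τ := RatFuncField.ringEquiv_ext n fun p ↦ by simp [rename_rename]

noncomputable instance : MulSemiringAction (Equiv.Perm (Fin n)) (RatFuncField n) :=
  MulSemiringAction.compHom _ (permAutHom n)

theorem perm_smul_def (σ : Equiv.Perm (Fin n)) (x : RatFuncField n) :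
    σ • x = permAut n σ x := rfl

instance : FaithfulSMul (Equiv.Perm (Fin n)) (RatFuncField n) where
  eq_of_smul_eq_smul {σ τ} h := Equiv.ext fun i ↦ by
    simpa [perm_smul_def] using h (algebraMap (MvPolynomial (Fin n) ℚ) (RatFuncField n) (X i))

theorem perm_smul_asRatFunc_eq_iff (σ : Equiv.Perm (Fin n)) (F : MvPolynomial (Fin n) ℤ) :
    σ • asRatFunc n F = asRatFunc n F ↔ rename σ F = F := by
  rw [perm_smul_def, asRatFunc, permAut_algebraMap, (IsFractionRing.injective _ _).eq_iff,
    ← map_rename, (map_injective _ (RingHom.injective_int _)).eq_iff]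

theorem range_algebraMap_fixedPoints_subset_fixedField (G : Subgroup (Equiv.Perm (Fin n))) :
    Set.range (algebraMap (FixedPoints.subfield G (RatFuncField n)) (RatFuncField n))
      ⊆ fixedField n G := by
  rintro _ ⟨⟨x, hx⟩, rfl⟩ σ hσ
  exact hx ⟨σ, hσ⟩

end PermAction

theorem statement2_general (n : ℕ) (G H : Subgroup (Equiv.Perm (Fin n)))
    (hHG : H ≤ G)
    (F : MvPolynomial (Fin n) ℤ)
    (hF : ∀ σ ∈ G, (rename (⇑σ) F = F ↔ σ ∈ H)) :
    fixedField n H = Subfield.closure ((fixedField n G : Set (RatFuncField n)) ∪ {asRatFunc n F}) := by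
  let K := FixedPoints.subfield G (RatFuncField n)
  have hstab (σ : G) :
      σ ∈ MulAction.stabilizer G (asRatFunc n F) ↔ (σ : Equiv.Perm (Fin n)) ∈ H :=
    (perm_smul_asRatFunc_eq_iff n σ F).trans (hF σ σ.2)
  refine le_antisymm ?_ (Subfield.closure_le.mpr ?_)
  · calc fixedField n H
        ≤ (FixedPoints.intermediateField (MulAction.stabilizer G (asRatFunc n F)) :
            IntermediateField K _).toSubfield := fun x hx σ ↦ hx σ ((hstab σ).mp σ.2)
      _ = Subfield.closure (Set.range (algebraMap K _) ∪ {asRatFunc n F}) := by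
        rw [IsGaloisGroup.fixedPoints_stabilizer_eq_adjoin_simple,
          IntermediateField.adjoin_toSubfield]
      _ ≤ _ := Subfield.closure_mono <|
        Set.union_subset_union_left _ (range_algebraMap_fixedPoints_subset_fixedField n G)
  · rintro x (hx | rfl) σ hσ
    · exact hx σ (hHG hσ)
    · exact (perm_smul_asRatFunc_eq_iff n σ F).mpr ((hF σ (hHG hσ)).mpr hσ)

/-- Let `n ≥ 1`, let `H ≤ G` be subgroups of `Sym(n)` and let
`F ∈ ℤ[X_1,…,X_n]` be a `G`-relative `H`-invariant, i.e. `Stab_G(F) = H` for the action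
`X_i ↦ X_{σ(i)}` (`MvPolynomial.rename σ`).  Then, viewing `F` as an element of
`ℚ(X_1,…,X_n)`, the fixed field `ℚ(X_1,…,X_n)^H` is generated over `ℚ(X_1,…,X_n)^G`
by `F`:  `ℚ(X)^H = ℚ(X)^G(F)`, the latter being the smallest subfield containing
`ℚ(X)^G` and `F`. -/
theorem statement2 (n : ℕ) (hn : 1 ≤ n) (G H : Subgroup (Equiv.Perm (Fin n)))
    (hHG : H ≤ G)
    (F : MvPolynomial (Fin n) ℤ)
    (hF : ∀ σ ∈ G, (rename (⇑σ) F = F ↔ σ ∈ H)) :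
    fixedField n H = Subfield.closure ((fixedField n G : Set (RatFuncField n)) ∪ {asRatFunc n F}) :=
  statement2_general n G H hHG F hF
end

section
/- Let H < G ≤ Sym(n) be transitive subgroups with H maximal in G, and let B_1,…,B_m be a block system for H (a partition of {1,…,n} into blocks preserved by H) that is not a block system for G (some g ∈ G does not preserve the partition). Then F := ∏_{i=1}^m ( ∑_{j ∈ B_i} X_j ) ∈ ℤ[X_1,…,X_n] is a G-relative H-invariant, i.e., Stab_G(F) = H. -/
/-!
The product `F = ∏ᵢ ∑_{j ∈ Bᵢ} X_j` remembers its blocks: for `x ∈ B_i` and `y ∈ B_j` the second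
partial derivative `∂²F / ∂x ∂y` vanishes exactly when `i = j`. Renaming variables commutes with
partial derivatives, so a permutation fixes `F` if and only if it maps blocks to blocks. Hence
`Stab_G(F)` lies between `H` and `G` but is not `G`, and maximality of `H` forces `Stab_G(F) = H`.
-/

open MvPolynomial Function

namespace MvPolynomial

variable {α ι R : Type*} [CommSemiring R]

def renameStabilizer (p : MvPolynomial α R) : Subgroup (Equiv.Perm α) where
  carrier := {σ | rename σ p = p}
  one_mem' := by simp
  mul_mem' {a b} ha hb := by
    simp only [Set.mem_ofPred_eq, Equiv.Perm.coe_mul, ← rename_rename] at ha hb ⊢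
    rw [hb, ha]
  inv_mem' {a} ha := by
    simp only [Set.mem_ofPred_eq] at ha ⊢
    conv_lhs => rw [← ha]
    rw [rename_rename, Equiv.Perm.inv_def, Equiv.symm_comp_self, rename_id_apply]

theorem mem_renameStabilizer {p : MvPolynomial α R} {σ : Equiv.Perm α} :
    σ ∈ renameStabilizer p ↔ rename σ p = p :=
  Iff.rfl

theorem pderiv_pderiv_of_rename_eq {σ : Equiv.Perm α} {p : MvPolynomial α R}
    (hp : rename σ p = p) (x y : α) :
    pderiv (σ x) (pderiv (σ y) p) = rename σ (pderiv x (pderiv y p)) := by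
  conv_lhs => rw [← hp]
  rw [pderiv_rename σ.injective, pderiv_rename σ.injective]

variable [DecidableEq α]

theorem pderiv_sum_X (x : α) (s : Finset α) :
    pderiv x (∑ j ∈ s, (X j : MvPolynomial α R)) = if x ∈ s then 1 else 0 := by
  rw [map_sum]
  split_ifs with hx
  · rw [Finset.sum_eq_single x (fun b _ hb => pderiv_X_of_ne hb) (absurd hx), pderiv_X_self]
  · exact Finset.sum_eq_zero fun b hb => pderiv_X_of_ne fun h => hx (h ▸ hb)

section BlockProduct

variable {B : ι → Finset α}

variable [Fintype ι] (R B) in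
noncomputable def blockProduct : MvPolynomial α R :=
  ∏ i, ∑ j ∈ B i, X j

theorem prod_sum_X_ne_zero [IsDomain R] (hne : ∀ i, (B i).Nonempty) (s : Finset ι) :
    ∏ k ∈ s, ∑ j ∈ B k, (X j : MvPolynomial α R) ≠ 0 := by
  refine Finset.prod_ne_zero_iff.mpr fun k _ hk => ?_
  obtain ⟨x, hx⟩ := hne k
  have h1 := congrArg (pderiv x) hk
  rw [pderiv_sum_X, if_pos hx, map_zero] at h1
  exact one_ne_zero h1

variable [DecidableEq ι]

theorem pderiv_prod_sum_X_of_forall_notMem {x : α} {s : Finset ι} (h : ∀ k ∈ s, x ∉ B k) :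
    pderiv x (∏ k ∈ s, ∑ j ∈ B k, (X j : MvPolynomial α R)) = 0 := by
  induction s using Finset.induction_on with
  | empty => simp
  | insert a s ha ih =>
    rw [Finset.prod_insert ha, pderiv_mul, pderiv_sum_X, if_neg (h a (Finset.mem_insert_self a s)),
      ih fun k hk => h k (Finset.mem_insert_of_mem hk), mul_zero, zero_mul, add_zero]

theorem pderiv_prod_sum_X_of_mem (hB : Pairwise (Disjoint on B)) {x : α} {i : ι} (hx : x ∈ B i)
    {s : Finset ι} (hi : i ∈ s) :
    pderiv x (∏ k ∈ s, ∑ j ∈ B k, (X j : MvPolynomial α R)) = ∏ k ∈ s.erase i, ∑ j ∈ B k, X j := by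
  rw [← Finset.mul_prod_erase s _ hi, pderiv_mul, pderiv_sum_X, if_pos hx,
    pderiv_prod_sum_X_of_forall_notMem fun k hk hxk =>
      Finset.disjoint_left.mp (hB (Finset.ne_of_mem_erase hk)) hxk hx,
    mul_zero, add_zero, one_mul]

variable [Fintype ι]

theorem pderiv_pderiv_blockProduct_eq_zero_iff [IsDomain R] (hB : Pairwise (Disjoint on B))
    (hne : ∀ i, (B i).Nonempty) {x y : α} {i j : ι} (hx : x ∈ B i) (hy : y ∈ B j) :
    pderiv x (pderiv y (blockProduct R B)) = 0 ↔ i = j := by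
  rw [blockProduct, pderiv_prod_sum_X_of_mem hB hy (Finset.mem_univ j)]
  constructor
  · intro h
    by_contra hij
    rw [pderiv_prod_sum_X_of_mem hB hx (Finset.mem_erase.mpr ⟨hij, Finset.mem_univ i⟩)] at h
    exact prod_sum_X_ne_zero hne _ h
  · rintro rfl
    exact pderiv_prod_sum_X_of_forall_notMem fun k hk hxk =>
      Finset.disjoint_left.mp (hB (Finset.ne_of_mem_erase hk)) hxk hx

theorem eq_iff_eq_of_rename_blockProduct_eq [IsDomain R] (hB : Pairwise (Disjoint on B))
    (hne : ∀ i, (B i).Nonempty) {σ : Equiv.Perm α}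
    (hF : rename σ (blockProduct R B) = blockProduct R B)
    {x y : α} {i j k l : ι} (hx : x ∈ B i) (hy : y ∈ B j) (hσx : σ x ∈ B k) (hσy : σ y ∈ B l) :
    k = l ↔ i = j := by
  rw [← pderiv_pderiv_blockProduct_eq_zero_iff (R := R) hB hne hσx hσy,
    ← pderiv_pderiv_blockProduct_eq_zero_iff (R := R) hB hne hx hy, pderiv_pderiv_of_rename_eq hF,
    map_eq_zero_iff _ (rename_injective σ σ.injective)]

theorem exists_image_eq_of_rename_blockProduct_eq [IsDomain R] (hB : Pairwise (Disjoint on B))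
    (hne : ∀ i, (B i).Nonempty) (hcover : ∀ x, ∃ i, x ∈ B i) {σ : Equiv.Perm α}
    (hF : rename σ (blockProduct R B) = blockProduct R B) (i : ι) :
    ∃ j, (B i).image σ = B j := by
  obtain ⟨x, hx⟩ := hne i
  obtain ⟨j, hσx⟩ := hcover (σ x)
  refine ⟨j, Finset.ext fun z => ⟨?_, fun hz => ?_⟩⟩
  · intro hz
    obtain ⟨y, hy, rfl⟩ := Finset.mem_image.mp hz
    obtain ⟨l, hσy⟩ := hcover (σ y)
    rwa [(eq_iff_eq_of_rename_blockProduct_eq hB hne hF hx hy hσx hσy).mpr rfl]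
  · obtain ⟨k, hk⟩ := hcover (σ.symm z)
    have hσk : σ (σ.symm z) ∈ B j := by rwa [σ.apply_symm_apply]
    have hik : i = k := (eq_iff_eq_of_rename_blockProduct_eq hB hne hF hx hk hσx hσk).mp rfl
    exact Finset.mem_image.mpr ⟨σ.symm z, hik ▸ hk, σ.apply_symm_apply z⟩

theorem rename_blockProduct_of_forall_exists_image_eq (hB : Pairwise (Disjoint on B))
    (hne : ∀ i, (B i).Nonempty) {σ : Equiv.Perm α} (h : ∀ i, ∃ j, (B i).image σ = B j) :
    rename σ (blockProduct R B) = blockProduct R B := by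
  choose π hπ using h
  have hπ_inj : Injective π := by
    intro a b hab
    have hBab : B a = B b :=
      Finset.image_injective σ.injective ((hπ a).trans (hab ▸ (hπ b).symm))
    by_contra hne_ab
    obtain ⟨x, hx⟩ := hne a
    exact Finset.disjoint_left.mp (hB hne_ab) hx (hBab ▸ hx)
  calc rename σ (blockProduct R B) = ∏ i, ∑ j ∈ B (π i), X j := by
        refine (map_prod _ _ _).trans (Finset.prod_congr rfl fun i _ => ?_)
        rw [← hπ i, Finset.sum_image fun a _ b _ h => σ.injective h, map_sum]
        simp only [rename_X]
    _ = blockProduct R B :=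
        (Equiv.ofBijective π hπ_inj.bijective_of_finite).prod_comp fun i => ∑ j ∈ B i, X j

theorem rename_blockProduct_eq_iff [IsDomain R] (hB : Pairwise (Disjoint on B))
    (hne : ∀ i, (B i).Nonempty) (hcover : ∀ x, ∃ i, x ∈ B i) {σ : Equiv.Perm α} :
    rename σ (blockProduct R B) = blockProduct R B ↔ ∀ i, ∃ j, (B i).image σ = B j :=
  ⟨exists_image_eq_of_rename_blockProduct_eq hB hne hcover,
    rename_blockProduct_of_forall_exists_image_eq hB hne⟩

end BlockProduct

end MvPolynomial

theorem statement7_general (n m : ℕ) (G H : Subgroup (Equiv.Perm (Fin n)))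
    (hHG : H < G)
    (hmax : ∀ K : Subgroup (Equiv.Perm (Fin n)), H < K → K ≤ G → K = G)
    (B : Fin m → Finset (Fin n))
    (hne : ∀ i, (B i).Nonempty)
    (hdisj : ∀ i j, i ≠ j → Disjoint (B i) (B j))
    (hcover : ∀ x : Fin n, ∃ i, x ∈ B i)
    (hHblocks : ∀ h ∈ H, ∀ i, ∃ j, Finset.image (⇑h) (B i) = B j)
    (hnotG : ∃ g ∈ G, ∃ i, ∀ j, Finset.image (⇑g) (B i) ≠ B j) :
    ∀ σ ∈ G,
      (rename (⇑σ) (∏ i : Fin m, ∑ j ∈ B i, (X j : MvPolynomial (Fin n) ℤ))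
          = ∏ i : Fin m, ∑ j ∈ B i, X j
        ↔ σ ∈ H) := by
  have hB : Pairwise (Disjoint on B) := fun i j => hdisj i j
  have hstab {σ : Equiv.Perm (Fin n)} :
      σ ∈ renameStabilizer (blockProduct ℤ B) ↔ ∀ i, ∃ j, (B i).image σ = B j :=
    mem_renameStabilizer.trans (rename_blockProduct_eq_iff hB hne hcover)
  set K := G ⊓ renameStabilizer (blockProduct ℤ B)
  have hHK : H ≤ K := fun h hh => ⟨hHG.le hh, hstab.mpr (hHblocks h hh)⟩
  have hKG : K ≠ G := by
    obtain ⟨g, hg, i, hgi⟩ := hnotG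
    intro hK
    obtain ⟨j, hj⟩ := hstab.mp (hK ▸ hg : g ∈ K).2 i
    exact hgi j hj
  have hKH : K = H :=
    ((lt_or_eq_of_le hHK).resolve_left fun hlt => hKG (hmax K hlt inf_le_left)).symm
  intro σ hσ
  rw [← hKH]
  exact ⟨fun h => ⟨hσ, h⟩, fun h => h.2⟩

/-- Let `H < G ≤ Sym(n)` be transitive subgroups with `H` maximal in `G`,
and let `B_1,…,B_m` be a block system for `H` (a partition of `{1,…,n}` into nonempty
pairwise disjoint sets, permuted by `H`) that is not a block system for `G` (some `g ∈ G`
maps some block to a set that is not a block of the system).  Then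
`F := ∏_{i=1}^m (∑_{j ∈ B_i} X_j)` is a `G`-relative `H`-invariant: `Stab_G(F) = H`,
the action being `X_i ↦ X_{σ(i)}` (`MvPolynomial.rename σ`). -/
theorem statement7 (n m : ℕ) (G H : Subgroup (Equiv.Perm (Fin n)))
    (hHG : H < G)
    (hmax : ∀ K : Subgroup (Equiv.Perm (Fin n)), H < K → K ≤ G → K = G)
    (hHtrans : ∀ a b : Fin n, ∃ σ ∈ H, σ a = b)
    (hGtrans : ∀ a b : Fin n, ∃ σ ∈ G, σ a = b)
    (B : Fin m → Finset (Fin n))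
    (hne : ∀ i, (B i).Nonempty)
    (hdisj : ∀ i j, i ≠ j → Disjoint (B i) (B j))
    (hcover : ∀ x : Fin n, ∃ i, x ∈ B i)
    (hHblocks : ∀ h ∈ H, ∀ i, ∃ j, Finset.image (⇑h) (B i) = B j)
    (hnotG : ∃ g ∈ G, ∃ i, ∀ j, Finset.image (⇑g) (B i) ≠ B j) :
    ∀ σ ∈ G,
      (rename (⇑σ) (∏ i : Fin m, ∑ j ∈ B i, (X j : MvPolynomial (Fin n) ℤ))
          = ∏ i : Fin m, ∑ j ∈ B i, X j
        ↔ σ ∈ H) :=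
  statement7_general n m G H hHG hmax B hne hdisj hcover hHblocks hnotG
end

section
/- Let H ≤ G ≤ Sym(n) be transitive subgroups with a common block system B_1,…,B_m (a partition of {1,…,n} preserved by G, hence by H). Let φ : G → Sym(m) be the induced action on the blocks (φ(g) maps i to j when B_i^g = B_j), set N_G := ker(φ) ∩ G, N_H := ker(φ) ∩ H, Ḡ := φ(G) and H̄ := φ(H), and assume N_H = N_G. Let E ∈ ℤ[X_1,…,X_m] be a Ḡ-relative H̄-invariant (Stab_{Ḡ}(E) = H̄). Then F := E(Y_1,…,Y_m), where Y_i := ∑_{j ∈ B_i} X_j, is a G-relative H-invariant: Stab_G(F) = H. -/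
/-!
Substituting `Y_i = ∑_{j ∈ B_i} X_j` intertwines the action of `g` on `ℤ[X_1,…,X_n]` with the
action of `φ(g)` on `ℤ[X_1,…,X_m]`, and it is injective because the `B_i` are disjoint and
nonempty: sending one chosen representative of each block to `X_i` and every other variable to
`0` undoes it. Hence `g` fixes `F` iff `φ(g)` fixes `E`, i.e. iff `φ(g) ∈ H̄`; since `H`
contains the kernel of `φ`, this happens iff `g ∈ H`.
-/

open MvPolynomial Function

namespace MvPolynomial

variable {R σ σ' τ τ' : Type*} [CommSemiring R]

variable (R) in
noncomputable def blockSum (B : τ → Finset σ) (i : τ) : MvPolynomial σ R :=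
  ∑ j ∈ B i, X j

theorem aeval_extend_blockSum {B : τ → Finset σ} (hdisj : Pairwise (Disjoint on B))
    {r : τ → σ} (hr : ∀ i, r i ∈ B i) (i : τ) :
    aeval (extend r (X : τ → MvPolynomial τ R) 0) (blockSum R B i) = X i := by
  have hrep : ∀ {j k}, r k ∈ B j → k = j := fun hk =>
    hdisj.eq (Finset.not_disjoint_iff.mpr ⟨_, hr _, hk⟩)
  have hr_inj : r.Injective := fun j k h => (hrep (h ▸ hr j)).symm
  rw [blockSum, map_sum, Finset.sum_eq_single_of_mem (r i) (hr i)]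
  · simp [hr_inj.extend_apply]
  · rintro j hj hji
    have hj_not_rep : ¬∃ k, r k = j := by
      rintro ⟨k, rfl⟩
      exact hji (congrArg r (hrep hj))
    simp [extend_apply' _ _ _ hj_not_rep]

theorem aeval_blockSum_injective {B : τ → Finset σ} (hne : ∀ i, (B i).Nonempty)
    (hdisj : Pairwise (Disjoint on B)) :
    Injective (aeval (R := R) (blockSum R B)) := by
  choose r hr using hne
  refine LeftInverse.injective (g := aeval (extend r (X : τ → MvPolynomial τ R) 0)) fun p => ?_
  rw [← AlgHom.comp_apply, comp_aeval]
  simp only [aeval_extend_blockSum hdisj hr, aeval_X_left_apply]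

theorem rename_aeval_blockSum [DecidableEq σ'] {B : τ → Finset σ} {B' : τ' → Finset σ'}
    {g : σ → σ'} (hg : g.Injective) {t : τ → τ'} (hB : ∀ i, (B i).image g = B' (t i))
    (p : MvPolynomial τ R) :
    rename g (aeval (blockSum R B) p) = aeval (blockSum R B') (rename t p) := by
  rw [aeval_rename, ← AlgHom.comp_apply, comp_aeval]
  congr 2
  funext i
  simp only [blockSum, map_sum, rename_X, comp_apply, ← hB i,
    Finset.sum_image hg.injOn]

end MvPolynomial

theorem MonoidHom.map_mem_map_iff_of_ker_le {G K : Type*} [Group G] [Group K] (φ : G →* K)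
    {L : Subgroup G} (hL : φ.ker ≤ L) {g : G} : φ g ∈ L.map φ ↔ g ∈ L := by
  rw [← Subgroup.mem_comap, Subgroup.comap_map_eq_self hL]

theorem statement8_general (n m : ℕ) (G H : Subgroup (Equiv.Perm (Fin n)))
    (B : Fin m → Finset (Fin n))
    (hne : ∀ i, (B i).Nonempty)
    (hdisj : ∀ i j, i ≠ j → Disjoint (B i) (B j))
    (φ : ↥G →* Equiv.Perm (Fin m))
    (hφ : ∀ (g : ↥G) (i : Fin m),
      Finset.image (⇑(g : Equiv.Perm (Fin n))) (B i) = B (φ g i))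
    (hker : ∀ g : ↥G, φ g = 1 → (g : Equiv.Perm (Fin n)) ∈ H)
    (E : MvPolynomial (Fin m) ℤ)
    (hE : ∀ τ : Equiv.Perm (Fin m), τ ∈ φ.range →
      (rename (⇑τ) E = E ↔ τ ∈ Subgroup.map φ (H.subgroupOf G))) :
    ∀ g ∈ G,
      (rename (⇑g) (aeval (fun i => ∑ j ∈ B i, (X j : MvPolynomial (Fin n) ℤ)) E)
          = aeval (fun i => ∑ j ∈ B i, (X j : MvPolynomial (Fin n) ℤ)) E
        ↔ g ∈ H) := by
  intro g hg
  let g' : ↥G := ⟨g, hg⟩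
  have hker_le : φ.ker ≤ H.subgroupOf G := fun k hk => hker k (φ.mem_ker.mp hk)
  change rename g' (aeval (blockSum ℤ B) E) = aeval (blockSum ℤ B) E ↔ g' ∈ H.subgroupOf G
  rw [rename_aeval_blockSum (Equiv.injective _) (hφ g'),
    (aeval_blockSum_injective hne hdisj).eq_iff, hE _ ⟨g', rfl⟩,
    φ.map_mem_map_iff_of_ker_le hker_le]

/-- Let `H ≤ G ≤ Sym(n)` be transitive subgroups with a common block
system `B_1,…,B_m` (a partition of `{1,…,n}` preserved by `G`, hence by `H`).  Let
`φ : G → Sym(m)` be the induced action on the blocks (`φ(g)` maps `i` to `j` when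
`B_i^g = B_j`), set `N_G := ker(φ)`, `N_H := {h ∈ H | φ(h) = 1}`, `Ḡ := φ(G)` and
`H̄ := φ(H)`, and assume `N_H = N_G` (since `N_H ⊆ N_G` always holds, this is the
hypothesis `hker` below).  Let `E ∈ ℤ[X_1,…,X_m]` be a `Ḡ`-relative `H̄`-invariant
(`Stab_{Ḡ}(E) = H̄`).  Then `F := E(Y_1,…,Y_m)`, where `Y_i := ∑_{j ∈ B_i} X_j`, is a
`G`-relative `H`-invariant: `Stab_G(F) = H`.  The action on polynomials is
`X_i ↦ X_{σ(i)}` (`MvPolynomial.rename σ`). -/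
theorem statement8 (n m : ℕ) (G H : Subgroup (Equiv.Perm (Fin n)))
    (hHG : H ≤ G)
    (hHtrans : ∀ a b : Fin n, ∃ σ ∈ H, σ a = b)
    (hGtrans : ∀ a b : Fin n, ∃ σ ∈ G, σ a = b)
    (B : Fin m → Finset (Fin n))
    (hne : ∀ i, (B i).Nonempty)
    (hdisj : ∀ i j, i ≠ j → Disjoint (B i) (B j))
    (hcover : ∀ x : Fin n, ∃ i, x ∈ B i)
    (φ : ↥G →* Equiv.Perm (Fin m))
    (hφ : ∀ (g : ↥G) (i : Fin m),
      Finset.image (⇑(g : Equiv.Perm (Fin n))) (B i) = B (φ g i))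
    (hker : ∀ g : ↥G, φ g = 1 → (g : Equiv.Perm (Fin n)) ∈ H)
    (E : MvPolynomial (Fin m) ℤ)
    (hE : ∀ τ : Equiv.Perm (Fin m), τ ∈ φ.range →
      (rename (⇑τ) E = E ↔ τ ∈ Subgroup.map φ (H.subgroupOf G))) :
    ∀ g ∈ G,
      (rename (⇑g) (aeval (fun i => ∑ j ∈ B i, (X j : MvPolynomial (Fin n) ℤ)) E)
          = aeval (fun i => ∑ j ∈ B i, (X j : MvPolynomial (Fin n) ℤ)) E
        ↔ g ∈ H) :=
  statement8_general n m G H B hne hdisj φ hφ hker E hE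
end

section
/- Let H ≤ G ≤ Sym(n) be transitive subgroups with a common block system B_1,…,B_m. Let Stab_H(B_1) and Stab_G(B_1) be the setwise stabilizers of the block B_1, and let H̃ := Stab_H(B_1)|_{B_1} and G̃ := Stab_G(B_1)|_{B_1} be the groups of permutations of B_1 induced by restriction. Assume (G : H) = (G̃ : H̃). Let E ∈ ℤ[X_j : j ∈ B_1] be a G̃-relative H̃-invariant (Stab_{G̃}(E) = H̃), and let σ_1,…,σ_m be a complete set of representatives of the right cosets of Stab_H(B_1) in H. Then F := E^{σ_1} + ⋯ + E^{σ_m} ∈ ℤ[X_1,…,X_n] is a G-relative H-invariant: Stab_G(F) = H. -/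
/-!
Since `H` is transitive it permutes the blocks transitively, so
`(G : H) = (Stab_G(B₁) : Stab_H(B₁))`. Restriction to `B₁` maps these stabilizers onto `G̃ ⊇ H̃`,
and `(G : H) = (G̃ : H̃)` says that it loses no index: an element of `Stab_G(B₁)` whose
restriction lies in `H̃` already lies in `H`. Hence `Stab_{Stab_G(B₁)}(E) = Stab_H(B₁)`.

The summand `E^{σ_k}` of `F` only involves the variables of the block `σ_k⁻¹ B₁`, and these blocks
are pairwise distinct. An element `g ∈ H` permutes the summands. Conversely, if `F^g = F`,
substituting `0` for the variables outside the block `(σ_1 g)⁻¹ B₁ = σ_j⁻¹ B₁` isolates a single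
summand on each side, up to the same constant, so `E^{σ_1 g} = E^{σ_j}`. Then `σ_1 g σ_j⁻¹`
stabilizes `B₁` and fixes `E`, hence lies in `H`, and so does `g`.
-/

open MvPolynomial

/-- The (right) action `F ↦ F^σ` of `Sym(n)` on polynomials by permuting the variables.
It satisfies `(F^σ)^τ = F^{στ}`, so that, as in the paper, sums of `F^{σ_i}` over
representatives `σ_i` of *right* cosets are well behaved; up to the substitution
`σ ↦ σ⁻¹` it is the action `X_i ↦ X_{σ(i)}`, and it has the same stabilizers. -/
noncomputable def permAct {n : ℕ} (σ : Equiv.Perm (Fin n))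
    (F : MvPolynomial (Fin n) ℤ) : MvPolynomial (Fin n) ℤ :=
  rename (⇑σ⁻¹) F

open Function MulAction Pointwise

namespace Subgroup

variable {Γ : Type*} [Group Γ]

theorem relIndex_eq_relIndex_inf_of_relIndex_eq {H G S : Subgroup Γ} (hHG : H ≤ G)
    (hS : S.relIndex H = S.relIndex G) (hS0 : S.relIndex G ≠ 0) :
    H.relIndex G = (H ⊓ S).relIndex (G ⊓ S) := by
  have hsplit := relIndex_inf_mul_relIndex H S G
  have htower := relIndex_mul_relIndex (H ⊓ S) H G inf_le_left hHG
  rw [inf_relIndex_left, hS, mul_comm, ← hsplit] at htower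
  rw [Nat.eq_of_mul_eq_mul_right (Nat.pos_of_ne_zero hS0) htower, ← inf_relIndex_right H,
    inf_comm S G, ← inf_assoc, inf_eq_left.mpr hHG]

theorem inf_comap_map_le_of_relIndex_map_eq {Δ : Type*} [Group Δ] (f : Γ →* Δ)
    {H K : Subgroup Γ} (hHK : H ≤ K) (h0 : H.relIndex K ≠ 0)
    (h : (H.map f).relIndex (K.map f) = H.relIndex K) : K ⊓ (H.map f).comap f ≤ H := by
  have htower := relIndex_mul_relIndex H (K ⊓ (H.map f).comap f) K
    (le_inf hHK (le_comap_map f H)) inf_le_left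
  rw [inf_relIndex_left, relIndex_comap, h] at htower
  exact relIndex_eq_one.mp (Nat.eq_of_mul_eq_mul_right (Nat.pos_of_ne_zero h0)
    (htower.trans (one_mul _).symm))

end Subgroup

namespace MulAction

variable {Γ X : Type*} [Group Γ] [MulAction Γ X]

theorem relIndex_stabilizer (G : Subgroup Γ) (x : X) :
    (stabilizer Γ x).relIndex G = (orbit G x).ncard :=
  index_stabilizer G x

theorem relIndex_eq_relIndex_inf_stabilizer [Finite X] {H G : Subgroup Γ} (hHG : H ≤ G) (x : X)
    (horbit : ∀ g ∈ G, ∃ h ∈ H, h • x = g • x) :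
    H.relIndex G = (H ⊓ stabilizer Γ x).relIndex (G ⊓ stabilizer Γ x) := by
  have horbit_eq : orbit H x = orbit G x := by
    ext y
    constructor
    · rintro ⟨h, rfl⟩
      exact ⟨⟨h, hHG h.2⟩, rfl⟩
    · rintro ⟨g, rfl⟩
      obtain ⟨h, hh, hhg⟩ := horbit g g.2
      exact ⟨⟨h, hh⟩, hhg⟩
  refine Subgroup.relIndex_eq_relIndex_inf_of_relIndex_eq hHG ?_ ?_
  · rw [relIndex_stabilizer, relIndex_stabilizer, horbit_eq]
  · rw [relIndex_stabilizer]
    exact (Set.ncard_pos (Set.toFinite _)).mpr ⟨x, mem_orbit_self x⟩ |>.ne'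

end MulAction

namespace Equiv.Perm

variable {α : Type*} [DecidableEq α]

theorem smul_finset_eq_image (σ : Perm α) (s : Finset α) : σ • s = s.image σ := rfl

theorem apply_mem_iff_of_mem_stabilizer {s : Finset α} {σ : Perm α}
    (hσ : σ ∈ stabilizer (Perm α) s) (x : α) : σ x ∈ s ↔ x ∈ s := by
  conv_lhs => rw [← mem_stabilizer_iff.mp hσ]
  exact Finset.smul_mem_smul_finset_iff σ

theorem mul_inv_smul_eq_self_iff (τ τ' : Perm α) (s : Finset α) :
    (τ * τ'⁻¹) • s = s ↔ τ'⁻¹ • s = τ⁻¹ • s := by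
  rw [mul_smul, smul_eq_iff_eq_inv_smul]

def blockRestrict (s : Finset α) : stabilizer (Perm α) s →* Perm α :=
  MonoidHom.mk'
    (fun σ => ofSubtype ((σ : Perm α).subtypePerm (apply_mem_iff_of_mem_stabilizer σ.2)))
    fun σ τ => by rw [← map_mul, subtypePerm_mul]; rfl

theorem blockRestrict_apply_of_mem (s : Finset α) (σ : stabilizer (Perm α) s) {x : α}
    (hx : x ∈ s) : blockRestrict s σ x = (σ : Perm α) x :=
  ofSubtype_subtypePerm_of_mem _ hx

theorem blockRestrict_apply_of_notMem (s : Finset α) (σ : stabilizer (Perm α) s) {x : α}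
    (hx : x ∉ s) : blockRestrict s σ x = x :=
  ofSubtype_subtypePerm_of_not_mem _ hx

/-- The paper's `P̃ = Stab_P(s)|_s`, realised in `Perm α` by fixing every point outside `s`. -/
def restrictToBlock (P : Subgroup (Perm α)) (s : Finset α) : Subgroup (Perm α) :=
  (P.subgroupOf (stabilizer (Perm α) s)).map (blockRestrict s)

theorem mem_restrictToBlock_iff (P : Subgroup (Perm α)) (s : Finset α) (τ : Perm α) :
    τ ∈ restrictToBlock P s ↔
      (∀ x ∉ s, τ x = x) ∧ ∃ σ ∈ P, s.image σ = s ∧ ∀ x ∈ s, σ x = τ x := by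
  constructor
  · rintro ⟨σ, hσP, rfl⟩
    exact ⟨fun x hx => blockRestrict_apply_of_notMem s σ hx, σ, hσP, σ.2,
      fun x hx => (blockRestrict_apply_of_mem s σ hx).symm⟩
  · rintro ⟨hout, σ, hσP, hσs, hagree⟩
    refine ⟨⟨σ, hσs⟩, hσP, Equiv.ext fun x => ?_⟩
    by_cases hx : x ∈ s
    · exact (blockRestrict_apply_of_mem s ⟨σ, hσs⟩ hx).trans (hagree x hx)
    · exact (blockRestrict_apply_of_notMem s ⟨σ, hσs⟩ hx).trans (hout x hx).symm

theorem mem_of_blockRestrict_mem [Finite α] {G H : Subgroup (Perm α)} {s : Finset α}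
    (hHG : H ≤ G) (horbit : ∀ g ∈ G, ∃ h ∈ H, h • s = g • s)
    (hidx : H.relIndex G = (restrictToBlock H s).relIndex (restrictToBlock G s))
    {ρ : Perm α} (hρG : ρ ∈ G) (hρs : ρ ∈ stabilizer (Perm α) s)
    (hρH : blockRestrict s ⟨ρ, hρs⟩ ∈ restrictToBlock H s) : ρ ∈ H := by
  have hidx_stab : H.relIndex G =
      (H.subgroupOf (stabilizer (Perm α) s)).relIndex
        (G.subgroupOf (stabilizer (Perm α) s)) := by
    rw [relIndex_eq_relIndex_inf_stabilizer hHG s horbit, ← Subgroup.inf_subgroupOf_right H,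
      ← Subgroup.inf_subgroupOf_right G, Subgroup.relIndex_subgroupOf inf_le_right]
  have hle := Subgroup.inf_comap_map_le_of_relIndex_map_eq (blockRestrict s)
    (Subgroup.subgroupOf_mono _ hHG) (hidx_stab ▸ Subgroup.index_ne_zero_of_finite)
    (hidx_stab ▸ hidx).symm
  exact hle ⟨hρG, hρH⟩

end Equiv.Perm

namespace MvPolynomial

variable {σ R : Type*} [CommSemiring R]

theorem aeval_congr_of_vars {S : Type*} [CommSemiring S] [Algebra R S] {f g : σ → S}
    {p : MvPolynomial σ R} (h : ∀ i ∈ p.vars, f i = g i) : aeval f p = aeval g p :=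
  eval₂Hom_congr' rfl (fun i hi _ => h i hi) rfl

theorem rename_congr_of_vars {τ : Type*} {f g : σ → τ} {p : MvPolynomial σ R}
    (h : ∀ i ∈ p.vars, f i = g i) : rename f p = rename g p := by
  simp only [rename_eq_aeval]
  exact aeval_congr_of_vars fun i hi => congrArg X (h i hi)

variable [DecidableEq σ]

noncomputable def zeroOutside (t : Finset σ) : MvPolynomial σ R →ₐ[R] MvPolynomial σ R :=
  aeval fun i => if i ∈ t then X i else 0

theorem zeroOutside_of_vars_subset {t : Finset σ} {p : MvPolynomial σ R} (h : p.vars ⊆ t) :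
    zeroOutside t p = p := by
  rw [zeroOutside, aeval_congr_of_vars (g := X) fun i hi => if_pos (h hi), aeval_X_left_apply]

theorem zeroOutside_of_disjoint {t : Finset σ} {p : MvPolynomial σ R} (h : Disjoint p.vars t) :
    zeroOutside t p = C (constantCoeff p) := by
  calc zeroOutside t p = aeval (0 : σ → MvPolynomial σ R) p :=
        aeval_congr_of_vars fun i hi => if_neg (Finset.disjoint_left.mp h hi)
    _ = C (constantCoeff p) := aeval_zero' p

theorem zeroOutside_sum {ι : Type*} [Fintype ι] {P : ι → MvPolynomial σ R} {t : ι → Finset σ}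
    (ht : Pairwise (Disjoint on t)) (hP : ∀ k, (P k).vars ⊆ t k) {c : R}
    (hc : ∀ k, constantCoeff (P k) = c) (j : ι) :
    zeroOutside (t j) (∑ k, P k) = P j + (Fintype.card ι - 1) • C c := by
  classical
  rw [map_sum, ← Finset.add_sum_erase _ _ (Finset.mem_univ j),
    zeroOutside_of_vars_subset (hP j), Finset.sum_congr rfl fun k hk => ?_, Finset.sum_const,
    Finset.card_erase_of_mem (Finset.mem_univ j), Finset.card_univ]
  rw [zeroOutside_of_disjoint ((ht (Finset.ne_of_mem_erase hk)).mono_left (hP k)), hc]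

theorem eq_of_sum_eq_sum_of_pairwise_disjoint {R : Type*} [CommRing R] {ι : Type*}
    [Fintype ι] {P Q : ι → MvPolynomial σ R} {t u : ι → Finset σ}
    (ht : Pairwise (Disjoint on t)) (hu : Pairwise (Disjoint on u))
    (hP : ∀ k, (P k).vars ⊆ t k) (hQ : ∀ k, (Q k).vars ⊆ u k) {c : R}
    (hPc : ∀ k, constantCoeff (P k) = c) (hQc : ∀ k, constantCoeff (Q k) = c)
    (hsum : ∑ k, P k = ∑ k, Q k) {i j : ι} (hij : t i = u j) : P i = Q j := by
  have h := congrArg (zeroOutside (t i)) hsum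
  rw [zeroOutside_sum ht hP hPc, hij, zeroOutside_sum hu hQ hQc] at h
  exact add_right_cancel h

end MvPolynomial

section Blocks

variable {α : Type*} [DecidableEq α]

theorem MulAction.IsBlock.disjoint_smul_finset {G : Subgroup (Equiv.Perm α)} {s : Finset α}
    (hB : IsBlock G (s : Set α)) {τ τ' : Equiv.Perm α} (hτ : τ ∈ G) (hτ' : τ' ∈ G)
    (hne : τ • s ≠ τ' • s) : Disjoint (τ • s) (τ' • s) := by
  have h := @hB ⟨τ, hτ⟩ ⟨τ', hτ'⟩ (by
    simpa only [Subgroup.mk_smul, ← Finset.coe_smul_finset, ne_eq, Finset.coe_inj] using hne)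
  simpa only [Subgroup.mk_smul, ← Finset.coe_smul_finset, Finset.disjoint_coe] using h

theorem isBlock_of_permutes_disjoint {ι : Type*} {G : Subgroup (Equiv.Perm α)}
    {B : ι → Finset α} (hdisj : ∀ i j, i ≠ j → Disjoint (B i) (B j))
    (hGB : ∀ g ∈ G, ∀ i, ∃ j, (B i).image g = B j) (i : ι) : IsBlock G (B i : Set α) := by
  rintro ⟨τ, hτ⟩ ⟨τ', hτ'⟩ hne
  obtain ⟨j, hj⟩ := hGB τ hτ i
  obtain ⟨j', hj'⟩ := hGB τ' hτ' i
  simp only [Subgroup.mk_smul, ← Finset.coe_smul_finset, ne_eq, Finset.coe_inj,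
    Finset.disjoint_coe, Equiv.Perm.smul_finset_eq_image, hj, hj'] at hne ⊢
  exact hdisj j j' (ne_of_apply_ne B hne)

theorem exists_smul_eq_smul_of_isBlock {G H : Subgroup (Equiv.Perm α)} {s : Finset α}
    (hHG : H ≤ G) (hHtrans : ∀ a b : α, ∃ σ ∈ H, σ a = b) (hs : s.Nonempty)
    (hB : IsBlock G (s : Set α)) {g : Equiv.Perm α} (hg : g ∈ G) : ∃ h ∈ H, h • s = g • s := by
  obtain ⟨x, hx⟩ := hs
  obtain ⟨h, hh, hhx⟩ := hHtrans x (g x)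
  refine ⟨h, hh, by_contra fun hne => Finset.disjoint_left.mp
    (hB.disjoint_smul_finset (hHG hh) hg hne) ?_ (Finset.smul_mem_smul_finset hx)⟩
  show g x ∈ h • s
  rw [← hhx]
  exact Finset.smul_mem_smul_finset hx

theorem pairwise_disjoint_smul_of_isBlock {ι : Type*} {G : Subgroup (Equiv.Perm α)}
    {s : Finset α} (hB : IsBlock G (s : Set α)) {τ : ι → Equiv.Perm α} (hτ : ∀ k, τ k ∈ G)
    (hinj : Injective fun k => τ k • s) : Pairwise (Disjoint on fun k => τ k • s) :=
  fun k k' hkk' => hB.disjoint_smul_finset (hτ k) (hτ k') (hinj.ne hkk')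

end Blocks

theorem injective_inv_smul_of_existsUnique {Γ X ι : Type*} [Group Γ] [MulAction Γ X]
    {H : Subgroup Γ} {x : X} {σs : ι → Γ} (hσH : ∀ k, σs k ∈ H)
    (hreps : ∀ h ∈ H, ∃! k, (σs k)⁻¹ • x = h⁻¹ • x) : Injective fun k => (σs k)⁻¹ • x :=
  fun k _ hkk' => (hreps _ (hσH k)).unique rfl hkk'.symm

section permAct

open Equiv.Perm (blockRestrict blockRestrict_apply_of_mem)

variable {n : ℕ}

theorem permAct_one (F : MvPolynomial (Fin n) ℤ) : permAct 1 F = F := by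
  simp [permAct]

theorem permAct_permAct (σ τ : Equiv.Perm (Fin n)) (F : MvPolynomial (Fin n) ℤ) :
    permAct σ (permAct τ F) = permAct (τ * σ) F := by
  simp only [permAct, rename_rename, mul_inv_rev, Equiv.Perm.coe_mul]

theorem permAct_injective (σ : Equiv.Perm (Fin n)) : Injective (permAct σ) :=
  rename_injective _ σ⁻¹.injective

theorem permAct_sum {ι : Type*} (σ : Equiv.Perm (Fin n)) (s : Finset ι)
    (F : ι → MvPolynomial (Fin n) ℤ) : permAct σ (∑ k ∈ s, F k) = ∑ k ∈ s, permAct σ (F k) :=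
  map_sum (rename _) F s

theorem constantCoeff_permAct (σ : Equiv.Perm (Fin n)) (F : MvPolynomial (Fin n) ℤ) :
    constantCoeff (permAct σ F) = constantCoeff F :=
  constantCoeff_rename _ F

theorem vars_permAct_subset {σ : Equiv.Perm (Fin n)} {F : MvPolynomial (Fin n) ℤ}
    {s : Finset (Fin n)} (h : F.vars ⊆ s) : (permAct σ F).vars ⊆ σ⁻¹ • s :=
  (vars_rename _ F).trans (Finset.image_subset_image h)

theorem permAct_eq_permAct_iff (τ τ' : Equiv.Perm (Fin n)) (F : MvPolynomial (Fin n) ℤ) :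
    permAct τ F = permAct τ' F ↔ permAct (τ * τ'⁻¹) F = F := by
  rw [← (permAct_injective τ'⁻¹).eq_iff, permAct_permAct, permAct_permAct, mul_inv_cancel,
    permAct_one]

theorem permAct_eq_permAct_blockRestrict {s : Finset (Fin n)} {F : MvPolynomial (Fin n) ℤ}
    (hF : F.vars ⊆ s) (ρ : stabilizer (Equiv.Perm (Fin n)) s) :
    permAct ρ F = permAct (blockRestrict s ρ) F := by
  refine rename_congr_of_vars fun i hi => ?_
  rw [← map_inv, blockRestrict_apply_of_mem s ρ⁻¹ (hF hi)]
  rfl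

end permAct

section InducedInvariant

open Equiv.Perm (restrictToBlock mul_inv_smul_eq_self_iff)

variable {n : ℕ} {G H : Subgroup (Equiv.Perm (Fin n))} {s : Finset (Fin n)}
  {E : MvPolynomial (Fin n) ℤ}

theorem permAct_eq_self_iff_of_relIndex_eq (hHG : H ≤ G)
    (horbit : ∀ g ∈ G, ∃ h ∈ H, h • s = g • s)
    (hidx : H.relIndex G = (restrictToBlock H s).relIndex (restrictToBlock G s))
    (hEvars : E.vars ⊆ s)
    (hE : ∀ τ ∈ restrictToBlock G s, (permAct τ E = E ↔ τ ∈ restrictToBlock H s))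
    {ρ : Equiv.Perm (Fin n)} (hρG : ρ ∈ G) (hρs : ρ • s = s) :
    permAct ρ E = E ↔ ρ ∈ H := by
  rw [permAct_eq_permAct_blockRestrict hEvars ⟨ρ, hρs⟩,
    hE _ (Subgroup.mem_map_of_mem _ (Subgroup.mem_subgroupOf.mpr hρG))]
  exact ⟨Equiv.Perm.mem_of_blockRestrict_mem hHG horbit hidx hρG hρs,
    fun hρH => Subgroup.mem_map_of_mem _ (Subgroup.mem_subgroupOf.mpr hρH)⟩

variable {ι : Type*} [Fintype ι] {σs : ι → Equiv.Perm (Fin n)}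

theorem permAct_sum_eq_of_mem (hinv : ∀ ρ ∈ H, ρ • s = s → permAct ρ E = E)
    (hσH : ∀ k, σs k ∈ H) (hreps : ∀ h ∈ H, ∃! k, (σs k)⁻¹ • s = h⁻¹ • s)
    {g : Equiv.Perm (Fin n)} (hg : g ∈ H) :
    permAct g (∑ k, permAct (σs k) E) = ∑ k, permAct (σs k) E := by
  have hσgH k : σs k * g ∈ H := mul_mem (hσH k) hg
  choose j hj _ using fun k => hreps _ (hσgH k)
  have hterm k : permAct (σs k * g) E = permAct (σs (j k)) E :=
    (permAct_eq_permAct_iff _ _ _).mpr (hinv _ (mul_mem (hσgH k) (inv_mem (hσH (j k))))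
      ((mul_inv_smul_eq_self_iff _ _ _).mpr (hj k)))
  have hj_inj : Injective j := fun k k' hkk' => by
    have h := (hj k).symm.trans ((congrArg (fun i => (σs i)⁻¹ • s) hkk').trans (hj k'))
    simp only [mul_inv_rev, mul_smul, smul_left_cancel_iff] at h
    exact injective_inv_smul_of_existsUnique hσH hreps h
  simp only [permAct_sum, permAct_permAct, hterm]
  exact Fintype.sum_bijective j (Finite.injective_iff_bijective.mp hj_inj) _ _ fun _ => rfl

theorem mem_of_permAct_sum_eq (hHG : H ≤ G) (hEvars : E.vars ⊆ s)
    (hstab : ∀ ρ ∈ G, ρ • s = s → permAct ρ E = E → ρ ∈ H)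
    (hB : IsBlock G (s : Set (Fin n))) (horbit : ∀ g ∈ G, ∃ h ∈ H, h • s = g • s)
    (hσH : ∀ k, σs k ∈ H) (hreps : ∀ h ∈ H, ∃! k, (σs k)⁻¹ • s = h⁻¹ • s)
    {g : Equiv.Perm (Fin n)} (hg : g ∈ G)
    (hF : permAct g (∑ k, permAct (σs k) E) = ∑ k, permAct (σs k) E) : g ∈ H := by
  have hσG k : σs k ∈ G := hHG (hσH k)
  have hinj := injective_inv_smul_of_existsUnique hσH hreps
  obtain ⟨k₀, -⟩ := hreps 1 (one_mem H)
  obtain ⟨h, hh, hhs⟩ := horbit _ (inv_mem (mul_mem (hσG k₀) hg))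
  obtain ⟨j, hj, -⟩ := hreps _ (inv_mem hh)
  rw [inv_inv, hhs] at hj
  have hterm : permAct (σs k₀ * g) E = permAct (σs j) E := by
    simp only [permAct_sum, permAct_permAct] at hF
    refine eq_of_sum_eq_sum_of_pairwise_disjoint
      (pairwise_disjoint_smul_of_isBlock hB (fun k => inv_mem (mul_mem (hσG k) hg)) ?_)
      (pairwise_disjoint_smul_of_isBlock hB (fun k => inv_mem (hσG k)) hinj)
      (fun k => vars_permAct_subset hEvars) (fun k => vars_permAct_subset hEvars)
      (fun k => constantCoeff_permAct _ _) (fun k => constantCoeff_permAct _ _) hF hj.symm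
    simpa only [mul_inv_rev, mul_smul, comp_def] using (MulAction.injective g⁻¹).comp hinj
  have hρH := hstab _ (mul_mem (mul_mem (hσG k₀) hg) (inv_mem (hσG j)))
    ((mul_inv_smul_eq_self_iff _ _ _).mpr hj)
    ((permAct_eq_permAct_iff _ _ _).mp hterm)
  have hg_eq : g = (σs k₀)⁻¹ * (σs k₀ * g * (σs j)⁻¹) * σs j := by group
  rw [hg_eq]
  exact mul_mem (mul_mem (inv_mem (hσH k₀)) hρH) (hσH j)

end InducedInvariant

theorem statement9_general (n m : ℕ) (hm : 0 < m)
    (G H : Subgroup (Equiv.Perm (Fin n))) (hHG : H ≤ G)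
    (hHtrans : ∀ a b : Fin n, ∃ σ ∈ H, σ a = b)
    (B : Fin m → Finset (Fin n))
    (hne : ∀ i, (B i).Nonempty)
    (hdisj : ∀ i j, i ≠ j → Disjoint (B i) (B j))
    (hGblocks : ∀ g ∈ G, ∀ i, ∃ j, Finset.image (⇑g) (B i) = B j)
    (G' H' : Subgroup (Equiv.Perm (Fin n)))
    (hG' : ∀ τ : Equiv.Perm (Fin n), τ ∈ G' ↔
      ((∀ x ∉ B ⟨0, hm⟩, τ x = x) ∧
        ∃ σ ∈ G, Finset.image (⇑σ) (B ⟨0, hm⟩) = B ⟨0, hm⟩ ∧ ∀ x ∈ B ⟨0, hm⟩, σ x = τ x))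
    (hH' : ∀ τ : Equiv.Perm (Fin n), τ ∈ H' ↔
      ((∀ x ∉ B ⟨0, hm⟩, τ x = x) ∧
        ∃ σ ∈ H, Finset.image (⇑σ) (B ⟨0, hm⟩) = B ⟨0, hm⟩ ∧ ∀ x ∈ B ⟨0, hm⟩, σ x = τ x))
    (hidx : H.relIndex G = H'.relIndex G')
    (E : MvPolynomial (Fin n) ℤ)
    (hEvars : E.vars ⊆ B ⟨0, hm⟩)
    (hE : ∀ τ ∈ G', (permAct τ E = E ↔ τ ∈ H'))
    (σs : Fin m → Equiv.Perm (Fin n))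
    (hσH : ∀ k, σs k ∈ H)
    (hreps : ∀ h ∈ H, ∃! k : Fin m,
      h * (σs k)⁻¹ ∈ H ∧
        Finset.image (⇑(h * (σs k)⁻¹)) (B ⟨0, hm⟩) = B ⟨0, hm⟩) :
    ∀ g ∈ G,
      (permAct g (∑ k : Fin m, permAct (σs k) E) = ∑ k : Fin m, permAct (σs k) E
        ↔ g ∈ H) := by
  set s := B ⟨0, hm⟩
  obtain rfl : G' = Equiv.Perm.restrictToBlock G s :=
    SetLike.ext fun τ => (hG' τ).trans (Equiv.Perm.mem_restrictToBlock_iff G s τ).symm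
  obtain rfl : H' = Equiv.Perm.restrictToBlock H s :=
    SetLike.ext fun τ => (hH' τ).trans (Equiv.Perm.mem_restrictToBlock_iff H s τ).symm
  have hB := isBlock_of_permutes_disjoint hdisj hGblocks ⟨0, hm⟩
  have horbit g (hg : g ∈ G) := exists_smul_eq_smul_of_isBlock hHG hHtrans (hne _) hB hg
  have hstab ρ (hρG : ρ ∈ G) (hρs : ρ • s = s) : permAct ρ E = E ↔ ρ ∈ H :=
    permAct_eq_self_iff_of_relIndex_eq hHG horbit hidx hEvars hE hρG hρs
  have hreps' : ∀ h ∈ H, ∃! k, (σs k)⁻¹ • s = h⁻¹ • s := fun h hh =>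
    (existsUnique_congr fun k => by
      rw [and_iff_right (mul_mem hh (inv_mem (hσH k))), ← Equiv.Perm.smul_finset_eq_image,
        Equiv.Perm.mul_inv_smul_eq_self_iff]).mp (hreps h hh)
  exact fun g hg =>
    ⟨mem_of_permAct_sum_eq hHG hEvars (fun ρ hρG hρs => (hstab ρ hρG hρs).mp) hB horbit
      hσH hreps' hg,
    permAct_sum_eq_of_mem (fun ρ hρH hρs => (hstab ρ (hHG hρH) hρs).mpr hρH) hσH hreps'⟩

/-- Let `H ≤ G ≤ Sym(n)` be transitive subgroups with a common block
system `B_1,…,B_m`.  Let `H̃ := Stab_H(B_1)|_{B_1}` and `G̃ := Stab_G(B_1)|_{B_1}` be the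
permutation groups of the block `B_1` induced by the setwise stabilizers of `B_1`; here
they are modelled faithfully as the subgroups `H'`, `G'` of `Sym(n)` consisting of the
permutations that fix every point outside `B_1` and agree on `B_1` with some element of
`Stab_H(B_1)` (resp. `Stab_G(B_1)`).  Assume `(G : H) = (G̃ : H̃)`.  Let
`E ∈ ℤ[X_j : j ∈ B_1]` (i.e. a polynomial all of whose variables lie in `B_1`) be a
`G̃`-relative `H̃`-invariant (`Stab_{G̃}(E) = H̃`), and let `σ_1,…,σ_m` be a complete set
of representatives of the right cosets of `Stab_H(B_1)` in `H`.  Then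
`F := E^{σ_1} + ⋯ + E^{σ_m}` is a `G`-relative `H`-invariant: `Stab_G(F) = H`. -/
theorem statement9 (n m : ℕ) (hm : 0 < m)
    (G H : Subgroup (Equiv.Perm (Fin n))) (hHG : H ≤ G)
    (hHtrans : ∀ a b : Fin n, ∃ σ ∈ H, σ a = b)
    (hGtrans : ∀ a b : Fin n, ∃ σ ∈ G, σ a = b)
    (B : Fin m → Finset (Fin n))
    (hne : ∀ i, (B i).Nonempty)
    (hdisj : ∀ i j, i ≠ j → Disjoint (B i) (B j))
    (hcover : ∀ x : Fin n, ∃ i, x ∈ B i)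
    (hGblocks : ∀ g ∈ G, ∀ i, ∃ j, Finset.image (⇑g) (B i) = B j)
    (G' H' : Subgroup (Equiv.Perm (Fin n)))
    (hG' : ∀ τ : Equiv.Perm (Fin n), τ ∈ G' ↔
      ((∀ x ∉ B ⟨0, hm⟩, τ x = x) ∧
        ∃ σ ∈ G, Finset.image (⇑σ) (B ⟨0, hm⟩) = B ⟨0, hm⟩ ∧ ∀ x ∈ B ⟨0, hm⟩, σ x = τ x))
    (hH' : ∀ τ : Equiv.Perm (Fin n), τ ∈ H' ↔
      ((∀ x ∉ B ⟨0, hm⟩, τ x = x) ∧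
        ∃ σ ∈ H, Finset.image (⇑σ) (B ⟨0, hm⟩) = B ⟨0, hm⟩ ∧ ∀ x ∈ B ⟨0, hm⟩, σ x = τ x))
    (hidx : H.relIndex G = H'.relIndex G')
    (E : MvPolynomial (Fin n) ℤ)
    (hEvars : E.vars ⊆ B ⟨0, hm⟩)
    (hE : ∀ τ ∈ G', (permAct τ E = E ↔ τ ∈ H'))
    (σs : Fin m → Equiv.Perm (Fin n))
    (hσH : ∀ k, σs k ∈ H)
    (hreps : ∀ h ∈ H, ∃! k : Fin m,
      h * (σs k)⁻¹ ∈ H ∧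
        Finset.image (⇑(h * (σs k)⁻¹)) (B ⟨0, hm⟩) = B ⟨0, hm⟩) :
    ∀ g ∈ G,
      (permAct g (∑ k : Fin m, permAct (σs k) E) = ∑ k : Fin m, permAct (σs k) E
        ↔ g ∈ H) :=
  statement9_general n m hm G H hHG hHtrans B hne hdisj hGblocks G' H' hG' hH' hidx E hEvars hE σs
    hσH hreps
end

section
/- Let f ∈ ℤ[x] be monic of degree n with n distinct roots α_1,…,α_n in a fixed algebraic closure K of ℚ, and let L = ℚ(α_1,…,α_n). Let H ≤ G ≤ Sym(n) and assume Gal(f) ≤ G, i.e., p(τ) ∈ G for every τ ∈ Gal(L/ℚ). Let F ∈ ℤ[X_1,…,X_n] be H-invariant (F^h = F for all h ∈ H), and let G//H be a set of representatives of the right cosets of H in G. Then the relative resolvent R_F(T) := ∏_{σ ∈ G//H} (T − F^σ(α_1,…,α_n)) ∈ L[T] has all of its coefficients in ℤ; i.e., R_F is (the image of) a polynomial in ℤ[T]. -/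
/-!
The Galois group acts on the values `F^σ(α)` through the permutation of the roots:
`τ(F^σ(α)) = F^{σ p(τ)⁻¹}(α)`. Since `p(τ) ∈ G` and `F` is `H`-invariant, right multiplication
by `p(τ)⁻¹` permutes the values `F^r(α)`, `r ∈ G//H`, so every `τ` fixes the coefficients of
`R_F`; as `L/ℚ` is Galois, they are rational. They are also integral over `ℤ`, being polynomial
expressions in the roots of the monic `f ∈ ℤ[x]`, hence integers.
-/

open MvPolynomial Polynomial

section Transversal

variable {Γ : Type*} [Group Γ] {G H : Subgroup Γ} {R : Finset Γ}

theorem eq_of_mul_inv_mem_of_unique_rep (hRG : ∀ r ∈ R, r ∈ G)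
    (hreps : ∀ g ∈ G, ∃! r, r ∈ R ∧ g * r⁻¹ ∈ H) {r s : Γ} (hr : r ∈ R) (hs : s ∈ R)
    (hrs : r * s⁻¹ ∈ H) : r = s :=
  (hreps r (hRG r hr)).unique ⟨hr, by simp⟩ ⟨hs, hrs⟩

/-- Right multiplication by `g ∈ G` permutes the right cosets of `H` in `G`, so it permutes `R`
up to left factors from `H`. -/
theorem prod_mul_right_of_unique_rep {M : Type*} [CommMonoid M] (hRG : ∀ r ∈ R, r ∈ G)
    (hreps : ∀ g ∈ G, ∃! r, r ∈ R ∧ g * r⁻¹ ∈ H) (V : Γ → M)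
    (hV : ∀ h ∈ H, ∀ x, V (h * x) = V x) {g : Γ} (hg : g ∈ G) :
    ∏ r ∈ R, V (r * g) = ∏ r ∈ R, V r := by
  choose! ρ hρR hρH using fun x (hx : x ∈ G) => (hreps x hx).exists
  have hρ_inv : ∀ {a b : Γ}, a ∈ G → b ∈ G → a ∈ R → ρ (ρ (a * b) * b⁻¹) = a := by
    intro a b ha hb haR
    have hab : a * b ∈ G := G.mul_mem ha hb
    have hc : ρ (a * b) * b⁻¹ ∈ G := G.mul_mem (hRG _ (hρR _ hab)) (G.inv_mem hb)
    refine (eq_of_mul_inv_mem_of_unique_rep hRG hreps haR (hρR _ hc) ?_).symm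
    simpa [mul_assoc] using H.mul_mem (hρH _ hab) (hρH _ hc)
  refine Finset.prod_nbij' (fun r => ρ (r * g)) (fun r => ρ (r * g⁻¹))
    (fun r hr => hρR _ (G.mul_mem (hRG r hr) hg))
    (fun r hr => hρR _ (G.mul_mem (hRG r hr) (G.inv_mem hg)))
    (fun r hr => hρ_inv (hRG r hr) hg hr)
    (fun r hr => by simpa using hρ_inv (hRG r hr) (G.inv_mem hg) hr) fun r hr => ?_
  have hrg : r * g ∈ G := G.mul_mem (hRG r hr) hg
  calc V (r * g) = V (r * g * (ρ (r * g))⁻¹ * ρ (r * g)) := by group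
    _ = V (ρ (r * g)) := hV _ (hρH _ hrg) _

end Transversal

theorem permAct_mul {n : ℕ} (σ τ : Equiv.Perm (Fin n)) (F : MvPolynomial (Fin n) ℤ) :
    permAct (σ * τ) F = permAct τ (permAct σ F) := by
  rw [permAct, permAct, permAct, rename_rename, mul_inv_rev]
  rfl

theorem map_aeval_permAct {n : ℕ} {A : Type*} [CommRing A] (φ : A →+* A) {v : Fin n → A}
    {π : Equiv.Perm (Fin n)} (hv : ∀ i, φ (v i) = v (π i)) (σ : Equiv.Perm (Fin n))
    (F : MvPolynomial (Fin n) ℤ) :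
    φ (aeval v (permAct σ F)) = aeval v (permAct (σ * π⁻¹) F) := by
  have := comp_aeval_apply (f := v) φ.toIntAlgHom (permAct σ F)
  simp only [RingHom.toIntAlgHom_apply] at this
  rw [this]
  simp only [permAct, aeval_rename]
  congr 2
  funext i
  simp [hv]

noncomputable def relativeResolvent {n : ℕ} {A : Type*} [CommRing A] (v : Fin n → A)
    (F : MvPolynomial (Fin n) ℤ) (R : Finset (Equiv.Perm (Fin n))) : A[X] :=
  ∏ r ∈ R, (Polynomial.X - Polynomial.C (MvPolynomial.aeval v (permAct r F)))

theorem map_relativeResolvent {n : ℕ} {A : Type*} [CommRing A]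
    {G H : Subgroup (Equiv.Perm (Fin n))} {R : Finset (Equiv.Perm (Fin n))} (hRG : ∀ r ∈ R, r ∈ G)
    (hreps : ∀ g ∈ G, ∃! r, r ∈ R ∧ g * r⁻¹ ∈ H) {F : MvPolynomial (Fin n) ℤ}
    (hF : ∀ h ∈ H, permAct h F = F) (φ : A →+* A) {v : Fin n → A} {π : Equiv.Perm (Fin n)}
    (hπ : π ∈ G) (hv : ∀ i, φ (v i) = v (π i)) :
    (relativeResolvent v F R).map φ = relativeResolvent v F R := by
  simp only [relativeResolvent, Polynomial.map_prod, Polynomial.map_sub, Polynomial.map_X,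
    Polynomial.map_C, map_aeval_permAct φ hv]
  exact prod_mul_right_of_unique_rep hRG hreps
    (fun σ => Polynomial.X - Polynomial.C (MvPolynomial.aeval v (permAct σ F)))
    (fun h hh σ => by simp only [permAct_mul, hF h hh]) (G.inv_mem hπ)

theorem isIntegral_aeval {R A σ : Type*} [CommRing R] [CommRing A] [Algebra R A]
    {v : σ → A} (hv : ∀ i, IsIntegral R (v i)) (F : MvPolynomial σ R) :
    IsIntegral R (MvPolynomial.aeval v F) := by
  change IsIntegral R (MvPolynomial.aeval (fun i => ((⟨v i, hv i⟩ : integralClosure R A) : A)) F)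
  rw [Subalgebra.mvPolynomial_aeval_coe]
  exact (MvPolynomial.aeval (fun i => (⟨v i, hv i⟩ : integralClosure R A)) F).2

theorem isIntegral_coeff_prod_X_sub_C {R A ι : Type*} [CommRing R] [CommRing A] [Algebra R A]
    {s : Finset ι} {v : ι → A} (hv : ∀ i ∈ s, IsIntegral R (v i)) (k : ℕ) :
    IsIntegral R ((∏ i ∈ s, (Polynomial.X - Polynomial.C (v i))).coeff k) := by
  have hmem : ∏ i ∈ s, (Polynomial.X - Polynomial.C (v i)) ∈
      liftsRing (algebraMap (integralClosure R A) A) :=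
    Subring.prod_mem _ fun i hi => Subring.sub_mem _
      ((lifts_iff_liftsRing _ _).1 (X_mem_lifts _))
      ((lifts_iff_liftsRing _ _).1 (C'_mem_lifts ⟨⟨v i, hv i hi⟩, rfl⟩))
  obtain ⟨⟨y, hy⟩, hyk⟩ := (lifts_iff_coeff_lifts _).1 ((lifts_iff_liftsRing _ _).2 hmem) k
  exact hyk ▸ hy

theorem exists_algebraMap_eq_of_isIntegral_of_forall_algEquiv_apply_eq {R F L : Type*}
    [CommRing R] [IsDomain R] [IsIntegrallyClosed R] [Field F] [Algebra R F]
    [IsFractionRing R F] [Field L] [Algebra F L] [Algebra R L] [IsScalarTower R F L]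
    [IsGalois F L] {x : L} (hfix : ∀ τ : L ≃ₐ[F] L, τ x = x) (hint : IsIntegral R x) :
    ∃ c : R, x = algebraMap R L c := by
  obtain ⟨q, rfl⟩ := (InfiniteGalois.mem_range_algebraMap_iff_fixed x).2 hfix
  obtain ⟨c, rfl⟩ := IsIntegrallyClosed.isIntegral_iff.mp
    ((isIntegral_algebraMap_iff (algebraMap F L).injective).1 hint)
  exact ⟨c, (IsScalarTower.algebraMap_apply R F L c).symm⟩

theorem isSplittingField_adjoin_range {F K ι : Type*} [Field F] [Field K] [Algebra F K]
    [Fintype ι] {f : F[X]} {α : ι → K}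
    (hf : f.map (algebraMap F K) = ∏ i, (Polynomial.X - Polynomial.C (α i))) :
    f.IsSplittingField F (IntermediateField.adjoin F (Set.range α)) := by
  have hsplits : (f.map (algebraMap F K)).Splits :=
    hf ▸ Splits.prod fun i _ => Splits.X_sub_C _
  have hroots : f.rootSet K = Set.range α := by
    classical
    ext x
    have hf0 : f ≠ 0 := by
      rintro rfl
      exact (monic_prod_of_monic _ _ fun i _ => monic_X_sub_C (α i)).ne_zero
        (by rw [← hf]; simp)
    rw [mem_rootSet, Polynomial.aeval_def, ← Polynomial.eval_map, hf, Polynomial.eval_prod,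
      Finset.prod_eq_zero_iff]
    simp [hf0, sub_eq_zero, eq_comm]
  rw [← hroots]
  exact IntermediateField.adjoin_rootSet_isSplittingField hsplits

theorem isGalois_adjoin_range {F K ι : Type*} [Field F] [PerfectField F] [Field K] [Algebra F K]
    [Fintype ι] {f : F[X]} {α : ι → K}
    (hf : f.map (algebraMap F K) = ∏ i, (Polynomial.X - Polynomial.C (α i))) :
    IsGalois F (IntermediateField.adjoin F (Set.range α)) := by
  have := isSplittingField_adjoin_range hf
  have := Normal.of_isSplittingField (F := F) (E := IntermediateField.adjoin F (Set.range α)) f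
  exact {}

theorem statement14_general (n : ℕ) (K : Type*) [Field K] [Algebra ℚ K]
    (f : Polynomial ℤ) (hmonic : f.Monic)
    (α : Fin n → K)
    (hroots : f.map (algebraMap ℤ K) = ∏ i : Fin n, (Polynomial.X - Polynomial.C (α i)))
    (L : IntermediateField ℚ K) (hL : L = IntermediateField.adjoin ℚ (Set.range α))
    (αL : Fin n → ↥L) (hαL : ∀ i, (αL i : K) = α i)
    (G H : Subgroup (Equiv.Perm (Fin n)))
    (p : (↥L ≃ₐ[ℚ] ↥L) → Equiv.Perm (Fin n))
    (hp : ∀ (τ : ↥L ≃ₐ[ℚ] ↥L) (i : Fin n), τ (αL i) = αL (p τ i))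
    (hGal : ∀ τ : ↥L ≃ₐ[ℚ] ↥L, p τ ∈ G)
    (F : MvPolynomial (Fin n) ℤ)
    (hF : ∀ h ∈ H, permAct h F = F)
    (R : Finset (Equiv.Perm (Fin n)))
    (hRG : ∀ r ∈ R, r ∈ G)
    (hreps : ∀ g ∈ G, ∃! r, r ∈ R ∧ g * r⁻¹ ∈ H) :
    ∀ k : ℕ,
      ∃ c : ℤ,
        (∏ r ∈ R, (Polynomial.X -
            Polynomial.C (MvPolynomial.aeval αL (permAct r F) : ↥L))).coeff k
          = algebraMap ℤ ↥L c := by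
  intro k
  have hrootsℚ : (f.map (algebraMap ℤ ℚ)).map (algebraMap ℚ K) =
      ∏ i, (Polynomial.X - Polynomial.C (α i)) := by
    rw [Polynomial.map_map, ← IsScalarTower.algebraMap_eq, hroots]
  have : IsGalois ℚ L := by
    -- `L` is a `ℚ`-algebra both as an intermediate field and as a field of characteristic zero
    subst hL
    convert isGalois_adjoin_range hrootsℚ
    exact Subsingleton.elim _ _
  have hαL_int : ∀ i, IsIntegral ℤ (αL i) := fun i => ⟨f, hmonic, by
    apply (algebraMap L K).injective
    rw [← Polynomial.aeval_def, map_zero, ← Polynomial.aeval_algebraMap_apply,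
      IntermediateField.algebraMap_apply, hαL, Polynomial.aeval_def, ← Polynomial.eval_map,
      hroots, Polynomial.eval_prod]
    exact Finset.prod_eq_zero (Finset.mem_univ i) (by simp)⟩
  change ∃ c : ℤ, (relativeResolvent αL F R).coeff k = algebraMap ℤ L c
  refine exists_algebraMap_eq_of_isIntegral_of_forall_algEquiv_apply_eq (F := ℚ) (fun τ => ?_)
    (isIntegral_coeff_prod_X_sub_C (fun r _ => isIntegral_aeval hαL_int _) k)
  have hτ := map_relativeResolvent hRG hreps hF (τ : L →+* L) (hGal τ) (hp τ)
  simpa only [Polynomial.coeff_map, RingHom.coe_coe] using congrArg (Polynomial.coeff · k) hτ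

/-- Lemma: integrality of the relative resolvent.  Let `f ∈ ℤ[x]` be
monic of degree `n` with `n` distinct roots `α_1,…,α_n` in a fixed algebraic closure `K`
of `ℚ`, and `L = ℚ(α_1,…,α_n)`.  Let `H ≤ G ≤ Sym(n)`, assume `Gal(f) ≤ G` (i.e. the
permutation `p(τ)` of the roots induced by any `τ ∈ Gal(L/ℚ)` lies in `G`), let
`F ∈ ℤ[X_1,…,X_n]` be `H`-invariant, and let `R = G//H` be a set of representatives of
the right cosets of `H` in `G`.  Then the relative resolvent
`R_F(T) := ∏_{σ ∈ G//H} (T − F^σ(α_1,…,α_n)) ∈ L[T]` has all its coefficients in `ℤ`. -/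
theorem statement14 (n : ℕ) (K : Type*) [Field K] [Algebra ℚ K] [IsAlgClosure ℚ K]
    (f : Polynomial ℤ) (hmonic : f.Monic) (hdeg : f.natDegree = n)
    (α : Fin n → K) (hinj : Function.Injective α)
    (hroots : f.map (algebraMap ℤ K) = ∏ i : Fin n, (Polynomial.X - Polynomial.C (α i)))
    (L : IntermediateField ℚ K) (hL : L = IntermediateField.adjoin ℚ (Set.range α))
    (αL : Fin n → ↥L) (hαL : ∀ i, (αL i : K) = α i)
    (G H : Subgroup (Equiv.Perm (Fin n))) (hHG : H ≤ G)
    (p : (↥L ≃ₐ[ℚ] ↥L) → Equiv.Perm (Fin n))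
    (hp : ∀ (τ : ↥L ≃ₐ[ℚ] ↥L) (i : Fin n), τ (αL i) = αL (p τ i))
    (hGal : ∀ τ : ↥L ≃ₐ[ℚ] ↥L, p τ ∈ G)
    (F : MvPolynomial (Fin n) ℤ)
    (hF : ∀ h ∈ H, permAct h F = F)
    (R : Finset (Equiv.Perm (Fin n)))
    (hRG : ∀ r ∈ R, r ∈ G)
    (hreps : ∀ g ∈ G, ∃! r, r ∈ R ∧ g * r⁻¹ ∈ H) :
    ∀ k : ℕ,
      ∃ c : ℤ,
        (∏ r ∈ R, (Polynomial.X -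
            Polynomial.C (MvPolynomial.aeval αL (permAct r F) : ↥L))).coeff k
          = algebraMap ℤ ↥L c :=
  statement14_general n K f hmonic α hroots L hL αL hαL G H p hp hGal F hF R hRG hreps
end
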